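/- arXiv:1803.01396 — 6 statements merged into one kernel-verified Lean document; each statement's English description precedes it below -/
import Mathlib

section
/- If n ≡ 2 (mod 4) and φ^{-1}(n) has exactly two elements, then φ^{-1}(n) = {p^k, 2·p^k} for some odd prime p and positive integer k. -/
private lemma four_dvd_of_even_mul {x y : ℕ} (hx : Even x) (hy : Even y) : 4 ∣ x * y := by
  obtain ⟨u, rfl⟩ := hx; obtain ⟨v, rfl⟩ := hy
  exact ⟨u * v, by ring⟩

private lemma odd_of_dvd {a b : ℕ} (h : a ∣ b) (hb : Odd b) : Odd a := by
  rcases h with ⟨c, rfl⟩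
  exact (Nat.odd_mul.mp hb).1

private lemma tot2 {m : ℕ} (hm : Odd m) : (2 * m).totient = m.totient := by
  rw [Nat.totient_mul, Nat.totient_two, one_mul]
  exact (Nat.Prime.coprime_iff_not_dvd Nat.prime_two).mpr (by
    intro h2; exact (Nat.not_even_iff_odd.mpr hm) ((even_iff_two_dvd).mpr h2))

private lemma lemB {m n : ℕ} (hm : Odd m) (hφ : m.totient = n) (hn4 : n % 4 = 2) :
    ∃ p k : ℕ, p.Prime ∧ Odd p ∧ 0 < k ∧ m = p ^ k := by
  have hm1 : m ≠ 1 := by rintro rfl; simp [Nat.totient_one] at hφ; omega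
  have hm0 : m ≠ 0 := by rintro rfl; simp at hφ; omega
  obtain ⟨p, hp, hpd⟩ := Nat.exists_prime_and_dvd hm1
  have hpodd : Odd p := odd_of_dvd hpd hm
  have hp3 : 3 ≤ p := by
    rcases Nat.odd_iff.mp hpodd with h
    have := hp.two_le; omega
  set a := m.factorization p with ha
  have ha1 : 0 < a := hp.factorization_pos_of_dvd hm0 hpd
  have hsplit : p ^ a * (m / p ^ a) = m := Nat.ordProj_mul_ordCompl_eq_self m p
  set c := m / p ^ a with hc
  have hcop : Nat.Coprime (p ^ a) c := (Nat.coprime_ordCompl hp hm0).pow_left a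
  have htot : m.totient = (p ^ a).totient * c.totient := by
    conv_lhs => rw [← hsplit]
    exact Nat.totient_mul hcop
  have hcdvd : c ∣ m := Nat.ordCompl_dvd m p
  have hcodd : Odd c := odd_of_dvd hcdvd hm
  clear_value a c
  by_cases hc1 : c = 1
  · exact ⟨p, a, hp, hpodd, ha1, by rw [← hsplit, hc1, mul_one]⟩
  · exfalso
    have hc3 : 3 ≤ c := by
      have h := Nat.odd_iff.mp hcodd
      omega
    have he1 : Even (p ^ a).totient := Nat.totient_even (by
      calc 2 < p := by omega
      _ ≤ p ^ a := Nat.le_self_pow (by omega) p)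
    have he2 : Even c.totient := Nat.totient_even (by omega)
    have h4d : 4 ∣ n := by rw [← hφ, htot]; exact four_dvd_of_even_mul he1 he2
    omega

private lemma lemA {x n : ℕ} (hφ : x.totient = n) (hn4 : n % 4 = 2) (hn2 : n ≠ 2) :
    Odd x ∨ (Odd (x / 2) ∧ x = 2 * (x / 2)) := by
  have hx0 : x ≠ 0 := by rintro rfl; simp at hφ; omega
  rcases Nat.even_or_odd x with hev | hodd
  · have hx2 : x % 2 = 0 := Nat.even_iff.mp hev
    rcases (show x % 4 = 0 ∨ x % 4 = 2 by omega) with h40 | h42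
    · exfalso
      set a := x.factorization 2 with ha
      have ha2 : 2 ≤ a := by
        have : 2 ^ 2 ∣ x := by omega
        exact (Nat.Prime.pow_dvd_iff_le_factorization Nat.prime_two hx0).mp this
      have hsplit : 2 ^ a * (x / 2 ^ a) = x := Nat.ordProj_mul_ordCompl_eq_self x 2
      set c := x / 2 ^ a with hc
      have hcop : Nat.Coprime (2 ^ a) c := (Nat.coprime_ordCompl Nat.prime_two hx0).pow_left a
      have htot : x.totient = (2 ^ a).totient * c.totient := by
        conv_lhs => rw [← hsplit]
        exact Nat.totient_mul hcop
      have ht2 : (2 ^ a).totient = 2 ^ (a - 1) := by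
        rw [Nat.totient_prime_pow Nat.prime_two (by omega)]; simp
      have hcodd : ¬ 2 ∣ c := Nat.not_dvd_ordCompl Nat.prime_two hx0
      clear_value a c
      by_cases hc1 : c = 1
      · have hne : n = 2 ^ (a - 1) := by
          rw [← hφ, htot, ht2, hc1, Nat.totient_one, mul_one]
        rcases (show a = 2 ∨ 3 ≤ a by omega) with h2' | h3
        · rw [h2'] at hne; norm_num at hne; omega
        · have : (4 : ℕ) ∣ 2 ^ (a - 1) := by
            calc (4 : ℕ) = 2 ^ 2 := by norm_num
            _ ∣ 2 ^ (a - 1) := pow_dvd_pow 2 (by omega)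
          omega
      · have hc0 : c ≠ 0 := by
          intro h; rw [h, mul_zero] at hsplit; omega
        have hc3 : 3 ≤ c := by
          have : c % 2 = 1 := Nat.two_dvd_ne_zero.mp hcodd
          omega
        have he1 : Even (2 ^ (a - 1)) := (Nat.even_pow).mpr ⟨even_two, by omega⟩
        have he2 : Even c.totient := Nat.totient_even (by omega)
        have h4d : 4 ∣ n := by
          rw [← hφ, htot, ht2]; exact four_dvd_of_even_mul he1 he2
        omega
    · exact Or.inr ⟨Nat.odd_iff.mpr (by omega), by omega⟩
  · exact Or.inl hodd

theorem preimage_of_multiplicity_two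
    (n : ℕ) (h4 : n % 4 = 2)
    (h2 : {x : ℕ | Nat.totient x = n}.ncard = 2) :
    ∃ p k : ℕ, p.Prime ∧ Odd p ∧ 0 < k ∧
      {x : ℕ | Nat.totient x = n} = {p ^ k, 2 * p ^ k} := by
  have hfin : {x : ℕ | Nat.totient x = n}.Finite :=
    Set.finite_of_ncard_ne_zero (by omega)
  have hn2 : n ≠ 2 := by
    rintro rfl
    have hsub : ({3, 4, 6} : Set ℕ) ⊆ {x : ℕ | Nat.totient x = 2} := by
      intro y hy
      rcases hy with rfl | rfl | rfl <;> simp [Set.mem_setOf_eq] <;> decide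
    have h3 : ({3, 4, 6} : Set ℕ).ncard = 3 := by
      rw [Set.ncard_insert_of_notMem (by norm_num), Set.ncard_pair (by norm_num)]
    have := Set.ncard_le_ncard hsub hfin
    omega
  obtain ⟨a, b, hab, hSab⟩ := Set.ncard_eq_two.mp h2
  have haS : a ∈ {x : ℕ | Nat.totient x = n} := by rw [hSab]; left; rfl
  have hφa : a.totient = n := haS
  have ha0 : a ≠ 0 := by rintro rfl; simp at hφa; omega
  rcases lemA hφa h4 hn2 with hodda | ⟨hoddc, heq⟩
  · have h2a : 2 * a ∈ {x : ℕ | Nat.totient x = n} := by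
      show (2 * a).totient = n
      rw [tot2 hodda, hφa]
    have hba : b = 2 * a := by
      rw [hSab] at h2a
      rcases h2a with h | h
      · exfalso; omega
      · exact h.symm
    obtain ⟨p, k, hp, hpo, hk, rfl⟩ := lemB hodda hφa h4
    exact ⟨p, k, hp, hpo, hk, by rw [hSab, hba]⟩
  · set c := a / 2 with hcdef
    have hφc : c.totient = n := by rw [← hφa]; conv_rhs => rw [heq, tot2 hoddc]
    have hcS : c ∈ {x : ℕ | Nat.totient x = n} := hφc
    have hca : c ≠ a := by omega
    have hcb : c = b := by
      rw [hSab] at hcS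
      rcases hcS with h | h
      · exact absurd h hca
      · exact h
    obtain ⟨p, k, hp, hpo, hk, hcpk⟩ := lemB hoddc hφc h4
    refine ⟨p, k, hp, hpo, hk, ?_⟩
    rw [hSab, ← hcb, ← hcpk, heq, Set.pair_comm]
end

section
/- If n ≡ 2 (mod 4) and φ^{-1}(n) has exactly four elements, then n + 1 is prime, and φ^{-1}(n) = {n+1, 2(n+1), q^m, 2·q^m} for some odd prime q and integer m > 1. -/
lemma totient_struct (n x : ℕ) (h4 : n % 4 = 2) (hx : Nat.totient x = n) :
    (n = 2 ∧ x = 4) ∨ ∃ p k : ℕ, p.Prime ∧ Odd p ∧ 1 ≤ k ∧ p ^ (k-1) * (p-1) = n ∧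
      (x = p ^ k ∨ x = 2 * p ^ k) := by
  have hn0 : n ≠ 0 := by omega
  have hx0 : x ≠ 0 := by rintro rfl; simp [Nat.totient_zero] at hx; omega
  have hx1 : x ≠ 1 := by rintro rfl; simp at hx; omega
  by_cases hodd : ∃ p, p.Prime ∧ p ≠ 2 ∧ p ∣ x
  · obtain ⟨p, hp, hp2, hpx⟩ := hodd
    have hpodd : Odd p := hp.odd_of_ne_two hp2
    have hpm : p % 2 = 1 := Nat.odd_iff.mp hpodd
    have hp3 : 3 ≤ p := by have := hp.two_le; omega
    -- uniqueness of the odd prime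
    have huniq : ∀ q, q.Prime → q ≠ 2 → q ∣ x → q = p := by
      intro q hq hq2 hqx
      by_contra hne
      have hq3 : 3 ≤ q := by
        have := hq.two_le; have := Nat.odd_iff.mp (hq.odd_of_ne_two hq2); omega
      set a := x.factorization p with ha
      have hxe : p ^ a * (x / p ^ a) = x := Nat.ordProj_mul_ordCompl_eq_self x p
      have hcop : Nat.Coprime p (x / p ^ a) := Nat.coprime_ordCompl hp hx0
      have ha1 : 0 < a := hp.factorization_pos_of_dvd hx0 hpx
      have hqs : q ∣ x / p ^ a := by
        have h1 : q ∣ (x / p ^ a) * p ^ a := by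
          rw [mul_comm, hxe]; exact hqx
        have hcq : Nat.Coprime q (p ^ a) :=
          (Nat.Coprime.pow_right _ ((Nat.coprime_primes hq hp).mpr hne))
        exact hcq.dvd_of_dvd_mul_right h1
      have hs0 : x / p ^ a ≠ 0 := by
        intro h; rw [h, mul_zero] at hxe; exact hx0 hxe.symm
      have h2s : 2 ∣ (x / p ^ a).totient := by
        have : 2 < x / p ^ a := lt_of_lt_of_le (by omega) (Nat.le_of_dvd (Nat.pos_of_ne_zero hs0) hqs)
        exact (Nat.totient_even this).two_dvd
      have h2p : 2 ∣ (p ^ a).totient := by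
        rw [Nat.totient_prime_pow hp ha1]
        exact Dvd.dvd.mul_left (by omega : (2:ℕ) ∣ p - 1) _
      have hmul : n = (p ^ a).totient * (x / p ^ a).totient := by
        rw [← hx, ← Nat.totient_mul (Nat.Coprime.pow_left _ hcop), hxe]
      obtain ⟨u, hu⟩ := h2p
      obtain ⟨v, hv⟩ := h2s
      have : 4 ∣ n := ⟨u * v, by rw [hmul, hu, hv]; ring⟩
      omega
    right
    have hxe : 2 ^ (x.factorization 2) * (x / 2 ^ (x.factorization 2)) = x :=
      Nat.ordProj_mul_ordCompl_eq_self x 2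
    set a := x.factorization 2 with ha
    set s := x / 2 ^ a with hs
    have hs2 : ¬ 2 ∣ s := Nat.not_dvd_ordCompl Nat.prime_two hx0
    have hs0 : s ≠ 0 := by intro h; exact hs2 (h ▸ dvd_zero 2)
    have hsp : ∀ {d}, d.Prime → d ∣ s → d = p := by
      intro d hd hds
      have hd2 : d ≠ 2 := by rintro rfl; exact hs2 hds
      exact huniq d hd hd2 (hds.trans ⟨2 ^ a, by rw [← hxe]; ring⟩)
    have hsk : s = p ^ s.primeFactorsList.length :=
      Nat.eq_prime_pow_of_unique_prime_dvd hs0 hsp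
    set k := s.primeFactorsList.length with hk
    have hs1 : s ≠ 1 := by
      intro h
      have : p ∣ 2 ^ a := by
        have : p ∣ 2 ^ a * s := by rw [hxe]; exact hpx
        rwa [h, mul_one] at this
      have := hp.dvd_of_dvd_pow this
      exact hp2 ((Nat.prime_dvd_prime_iff_eq hp Nat.prime_two).mp this)
    have hk1 : 1 ≤ k := by
      rcases Nat.eq_zero_or_pos k with h | h
      · rw [h, pow_zero] at hsk; exact absurd hsk hs1
      · exact h
    have hφs : s.totient = p ^ (k-1) * (p-1) := by
      rw [hsk, Nat.totient_prime_pow hp hk1]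
    have hcop2 : Nat.Coprime (2 ^ a) s := Nat.Coprime.pow_left _ (by
      rw [Nat.coprime_two_left]; exact Nat.odd_iff.mpr (by omega))
    have hmul : n = (2 ^ a).totient * s.totient := by
      rw [← hx, ← Nat.totient_mul hcop2, hxe]
    have h2pk : 2 ∣ p ^ (k-1) * (p-1) :=
      Dvd.dvd.mul_left (by omega : (2:ℕ) ∣ p - 1) _
    match a, ha with
    | 0, ha =>
      refine ⟨p, k, hp, hpodd, hk1, ?_, Or.inl ?_⟩
      · rw [hmul, pow_zero, Nat.totient_one, one_mul, hφs]
      · rw [← hxe, ← hsk]; simp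
    | 1, ha =>
      refine ⟨p, k, hp, hpodd, hk1, ?_, Or.inr ?_⟩
      · rw [hmul, pow_one, Nat.totient_two, one_mul, hφs]
      · rw [← hxe, ← hsk]; norm_num
    | (a+2), ha =>
      exfalso
      have h2a : (2 ^ (a+2)).totient = 2 ^ (a+1) := by
        rw [Nat.totient_prime_pow Nat.prime_two (by omega)]; simp
      have : 4 ∣ n := by
        rw [hmul, h2a, hφs]
        obtain ⟨v, hv⟩ := h2pk
        exact ⟨2 ^ a * v, by rw [hv, pow_succ]; ring⟩
      omega
  · -- all prime divisors are 2
    have hall : ∀ {d}, d.Prime → d ∣ x → d = 2 := by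
      intro d hd hdx
      by_contra h
      exact hodd ⟨d, hd, h, hdx⟩
    have hxk : x = 2 ^ x.primeFactorsList.length :=
      Nat.eq_prime_pow_of_unique_prime_dvd hx0 hall
    set v := x.primeFactorsList.length with hv
    match v, hv with
    | 0, hv => rw [pow_zero] at hxk; exact absurd hxk hx1
    | 1, hv =>
      rw [pow_one] at hxk
      rw [hxk, Nat.totient_two] at hx; omega
    | 2, hv =>
      left
      have h44 : Nat.totient (2 ^ 2) = 2 := by decide
      rw [hxk, h44] at hx
      exact ⟨hx.symm, by rw [hxk]; norm_num⟩
    | (v+3), hv =>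
      exfalso
      have : x.totient = 2 ^ (v+2) := by
        rw [hxk, Nat.totient_prime_pow Nat.prime_two (by omega)]; simp
      have : 4 ∣ n := by
        rw [← hx, this]
        exact ⟨2 ^ v, by rw [pow_succ, pow_succ]; ring⟩
      omega

lemma odd_sol (n x : ℕ) (h4 : n % 4 = 2) (hn2 : n ≠ 2) (hx : Nat.totient x = n)
    (hox : Odd x) :
    ∃ p k : ℕ, p.Prime ∧ Odd p ∧ 1 ≤ k ∧ p ^ (k-1) * (p-1) = n ∧ x = p ^ k := by
  rcases totient_struct n x h4 hx with ⟨h2, -⟩ | ⟨p, k, hp, hop, hk, hpn, hx'⟩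
  · exact absurd h2 hn2
  · rcases hx' with rfl | rfl
    · exact ⟨p, k, hp, hop, hk, hpn, rfl⟩
    · exfalso; have := Nat.odd_iff.mp hox; omega

theorem preimage_of_multiplicity_four
    (n : ℕ) (h4 : n % 4 = 2)
    (hcard : {x : ℕ | Nat.totient x = n}.ncard = 4) :
    Nat.Prime (n + 1) ∧
    ∃ q m : ℕ, q.Prime ∧ Odd q ∧ 1 < m ∧
      {x : ℕ | Nat.totient x = n} = {n + 1, 2 * (n + 1), q ^ m, 2 * q ^ m} := by
  have hn2 : n ≠ 2 := by
    rintro rfl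
    have hsub : {x : ℕ | Nat.totient x = 2} ⊆ {3, 4, 6} := by
      intro x hx
      rcases totient_struct 2 x h4 hx with ⟨-, rfl⟩ | ⟨p, k, hp, hop, hk, hpn, hx'⟩
      · simp
      · have hpm : p % 2 = 1 := Nat.odd_iff.mp hop
        have hp3 : 3 ≤ p := by have := hp.two_le; omega
        have hd : p - 1 ∣ 2 := ⟨p ^ (k-1), by rw [← hpn, mul_comm]⟩
        have hple : p - 1 ≤ 2 := Nat.le_of_dvd (by omega) hd
        have hp' : p = 3 := by omega
        subst hp'
        have hk0 : k - 1 = 0 := by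
          by_contra h
          have h3 : 3 ≤ 3 ^ (k - 1) := Nat.le_self_pow h 3
          omega
        have hk' : k = 1 := by omega
        subst hk'
        rcases hx' with rfl | rfl <;> simp
    have h3 : ({3, 4, 6} : Set ℕ).ncard = 3 := by
      rw [Set.ncard_insert_of_notMem (by simp), Set.ncard_insert_of_notMem (by simp),
        Set.ncard_singleton]
    have hle := Set.ncard_le_ncard hsub
      ((Set.finite_singleton 6).insert 4 |>.insert 3)
    omega
  set S := {x : ℕ | Nat.totient x = n} with hSdef
  have hfin : S.Finite := by
    by_contra h
    rw [Set.Infinite.ncard h] at hcard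
    omega
  set O := {x : ℕ | Nat.totient x = n ∧ Odd x} with hOdef
  set E := {x : ℕ | Nat.totient x = n ∧ Even x} with hEdef
  have hSOE : S = O ∪ E := by
    ext y
    simp only [hSdef, hOdef, hEdef, Set.mem_setOf_eq, Set.mem_union]
    constructor
    · intro h
      rcases Nat.even_or_odd y with he | ho
      · exact Or.inr ⟨h, he⟩
      · exact Or.inl ⟨h, ho⟩
    · rintro (⟨h, -⟩ | ⟨h, -⟩) <;> exact h
  have hEO : E = (fun t => 2 * t) '' O := by
    ext y
    simp only [hOdef, hEdef, Set.mem_setOf_eq, Set.mem_image]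
    constructor
    · rintro ⟨hy, hey⟩
      rcases totient_struct n y h4 hy with ⟨h2, -⟩ | ⟨p, k, hp, hop, hk, hpn, hy'⟩
      · exact absurd h2 hn2
      · rcases hy' with rfl | rfl
        · exfalso
          have := Nat.odd_iff.mp (hop.pow : Odd (p ^ k))
          have := Nat.even_iff.mp hey
          omega
        · refine ⟨p ^ k, ⟨?_, hop.pow⟩, rfl⟩
          rw [Nat.totient_prime_pow hp hk]; exact hpn
    · rintro ⟨t, ⟨ht, hot⟩, rfl⟩
      refine ⟨?_, even_two_mul t⟩
      rw [Nat.totient_mul (Nat.coprime_two_left.mpr hot), Nat.totient_two, one_mul, ht]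
  have hdisj : Disjoint O E := by
    rw [Set.disjoint_left]
    rintro y ⟨-, ho⟩ ⟨-, he⟩
    have := Nat.odd_iff.mp ho
    have := Nat.even_iff.mp he
    omega
  have hOfin : O.Finite := hfin.subset (fun y hy => hy.1)
  have hEfin : E.Finite := hfin.subset (fun y hy => hy.1)
  have hcards : O.ncard + E.ncard = 4 := by
    rw [← Set.ncard_union_eq hdisj hOfin hEfin, ← hSOE]
    exact hcard
  have hEcard : E.ncard = O.ncard := by
    rw [hEO]
    exact Set.ncard_image_of_injective _ (fun a b h => by omega)
  have hO2 : O.ncard = 2 := by omega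
  obtain ⟨a, b, hab, hOab⟩ := Set.ncard_eq_two.mp hO2
  have haO : a ∈ O := by rw [hOab]; exact Set.mem_insert _ _
  have hbO : b ∈ O := by rw [hOab]; exact Set.mem_insert_of_mem _ rfl
  obtain ⟨p, k, hp, hop, hk, hpn, rfl⟩ := odd_sol n a h4 hn2 haO.1 haO.2
  obtain ⟨q, m, hq, hoq, hm, hqn, rfl⟩ := odd_sol n b h4 hn2 hbO.1 hbO.2
  have hp3 : 3 ≤ p := by have := hp.two_le; have := Nat.odd_iff.mp hop; omega
  have hq3 : 3 ≤ q := by have := hq.two_le; have := Nat.odd_iff.mp hoq; omega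
  have hpq : p ≠ q := by
    rintro rfl
    have h1 : p ^ (k-1) = p ^ (m-1) :=
      Nat.eq_of_mul_eq_mul_right (show 0 < p - 1 by omega) (hpn.trans hqn.symm)
    have h2 := Nat.pow_right_injective hp.two_le h1
    exact hab (by rw [show k = m by omega])
  have hnotboth : k = 1 ∨ m = 1 := by
    by_contra h
    push_neg at h
    have hd1 : p ^ (k-1) ∣ (q-1) * q ^ (m-1) := by
      have h0 : p ^ (k-1) ∣ n := ⟨p - 1, hpn.symm⟩
      rw [← hqn, mul_comm] at h0
      exact h0
    have hcop : Nat.Coprime (p ^ (k-1)) (q ^ (m-1)) :=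
      Nat.Coprime.pow _ _ ((Nat.coprime_primes hp hq).mpr hpq)
    have hd2 : p ^ (k-1) ∣ q - 1 := hcop.dvd_of_dvd_mul_right hd1
    have l1 : p ≤ q - 1 :=
      le_trans (Nat.le_self_pow (by omega) p) (Nat.le_of_dvd (by omega) hd2)
    have hd1' : q ^ (m-1) ∣ (p-1) * p ^ (k-1) := by
      have h0 : q ^ (m-1) ∣ n := ⟨q - 1, hqn.symm⟩
      rw [← hpn, mul_comm] at h0
      exact h0
    have hd2' : q ^ (m-1) ∣ p - 1 :=
      (Nat.Coprime.pow _ _ ((Nat.coprime_primes hq hp).mpr hpq.symm)).dvd_of_dvd_mul_right hd1'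
    have l2 : q ≤ p - 1 :=
      le_trans (Nat.le_self_pow (by omega) q) (Nat.le_of_dvd (by omega) hd2')
    omega
  have key : ∃ P Q M : ℕ, P = n + 1 ∧ P.Prime ∧ Q.Prime ∧ Odd Q ∧ 1 < M ∧
      O = {P, Q ^ M} := by
    rcases hnotboth with rfl | rfl
    · have hpn' : p - 1 = n := by simpa using hpn
      have hm2 : 1 < m := by
        rcases Nat.lt_or_ge 1 m with h | h
        · exact h
        · exfalso
          have hm1 : m = 1 := by omega
          subst hm1
          have : q - 1 = n := by simpa using hqn
          exact hpq (by omega)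
      exact ⟨p, q, m, by omega, hp, hq, hoq, hm2, by rw [hOab, pow_one]⟩
    · have hqn' : q - 1 = n := by simpa using hqn
      have hk2 : 1 < k := by
        rcases Nat.lt_or_ge 1 k with h | h
        · exact h
        · exfalso
          have hk1 : k = 1 := by omega
          subst hk1
          have : p - 1 = n := by simpa using hpn
          exact hpq (by omega)
      exact ⟨q, p, k, by omega, hq, hp, hop, hk2, by rw [hOab, pow_one, Set.pair_comm]⟩
  obtain ⟨P, Q, M, hPn, hPp, hQp, hQo, hM, hOeq⟩ := key
  subst hPn
  refine ⟨hPp, Q, M, hQp, hQo, hM, ?_⟩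
  rw [hSOE, hEO, hOeq, Set.image_insert_eq, Set.image_singleton]
  ext y
  simp only [Set.mem_union, Set.mem_insert_iff, Set.mem_singleton_iff]
  tauto
end

section
/- There do not exist distinct odd primes p, q and integers k, m ≥ 2 such that p^{k-1}(p-1) = q^{m-1}(q-1). -/
theorem no_two_proper_prime_powers_same_totient :
    ¬ ∃ p q k m : ℕ, p.Prime ∧ q.Prime ∧ Odd p ∧ Odd q ∧ p ≠ q ∧
      2 ≤ k ∧ 2 ≤ m ∧ p ^ (k - 1) * (p - 1) = q ^ (m - 1) * (q - 1) := by
  rintro ⟨p, q, k, m, hp, hq, -, -, hne, hk, hm, heq⟩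
  have hp2 := hp.two_le
  have hq2 := hq.two_le
  have key : ∀ a b i j : ℕ, a.Prime → b.Prime → a ≠ b → 1 ≤ i →
      a ^ i * (a - 1) = b ^ j * (b - 1) → a ≤ b - 1 := by
    intro a b i j ha hb hab hi h
    have hd : a ∣ b ^ j * (b - 1) := by
      rw [← h]
      exact Dvd.dvd.mul_right (dvd_pow_self a (by omega)) _
    have : a ∣ b - 1 := by
      rcases (Nat.Prime.dvd_mul ha).mp hd with h1 | h1
      · rcases (hb.eq_one_or_self_of_dvd a (ha.dvd_of_dvd_pow h1)) with h2 | h2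
        · exact absurd h2 ha.ne_one
        · exact absurd h2 hab
      · exact h1
    exact Nat.le_of_dvd (by have := hb.two_le; omega) this
  have h1 := key p q (k-1) (m-1) hp hq hne (by omega) heq
  have h2 := key q p (m-1) (k-1) hq hp hne.symm (by omega) heq.symm
  omega
end

section
/- Let m = 2^k · r with k ≥ 1 and r odd. If the equation φ(x) = 2r has exactly four solutions, then the equation φ(x) = m has at least two solutions. -/
/-!
The map sending an even `x` to `2 ^ (k - 1) * x` and an odd `x` to `2 ^ k * x` multiplies
`φ x` by `2 ^ (k - 1)`, so it sends solutions of `φ x = 2 * r` to solutions of `φ x = m`, and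
it is at most two-to-one (only `x` and `2 * x`, for odd `x`, can collide). Four solutions of
`φ x = 2 * r` therefore give at least two of `φ x = m`. The counting needs the fibres of `φ`
to be finite, which follows from `n ≤ φ n * ∏_{p ∣ n} p` and `p - 1 ∣ φ n` for primes
`p ∣ n`.
-/

namespace Nat

theorem prod_primeFactors_le_primorial (n : ℕ) :
    ∏ p ∈ n.primeFactors, p ≤ primorial (φ n + 1) := by
  rcases eq_or_ne n 0 with rfl | hn
  · simp
  refine Nat.le_of_dvd (primorial_pos _) (Finset.prod_dvd_prod_of_subset _ _ _ fun p hp => ?_)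
  have hprime := prime_of_mem_primeFactors hp
  have hpφ : p - 1 ≤ φ n :=
    Nat.le_of_dvd (totient_pos.2 (Nat.pos_of_ne_zero hn))
      (totient_prime hprime ▸ totient_dvd_of_dvd (dvd_of_mem_primeFactors hp))
  exact Finset.mem_filter.2 ⟨Finset.mem_range.2 (by omega), hprime⟩

theorem le_totient_mul_primorial (n : ℕ) : n ≤ φ n * primorial (φ n + 1) := by
  have hprod : 0 < ∏ p ∈ n.primeFactors, (p - 1) :=
    Finset.prod_pos fun p hp => Nat.sub_pos_of_lt (prime_of_mem_primeFactors hp).one_lt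
  calc n ≤ n * ∏ p ∈ n.primeFactors, (p - 1) := Nat.le_mul_of_pos_right n hprod
    _ = φ n * ∏ p ∈ n.primeFactors, p := (totient_mul_prod_primeFactors n).symm
    _ ≤ φ n * primorial (φ n + 1) := Nat.mul_le_mul_left _ (prod_primeFactors_le_primorial n)

theorem finite_setOf_totient_eq (m : ℕ) : {x : ℕ | φ x = m}.Finite :=
  (Set.finite_Iic (m * primorial (m + 1))).subset fun x (hx : φ x = m) =>
    hx ▸ le_totient_mul_primorial x

theorem totient_two_pow_mul_of_even {x : ℕ} (hx : Even x) (j : ℕ) :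
    φ (2 ^ j * x) = 2 ^ j * φ x := by
  induction j with
  | zero => simp
  | succ j ih =>
    rw [pow_succ', mul_assoc, totient_two_mul_of_even (hx.mul_left _), ih, mul_assoc]

theorem totient_two_pow_succ_mul_of_odd {x : ℕ} (hx : Odd x) (j : ℕ) :
    φ (2 ^ (j + 1) * x) = 2 ^ j * φ x := by
  rw [pow_succ, mul_assoc, totient_two_pow_mul_of_even (even_two_mul x),
    totient_two_mul_of_odd hx]

theorem ncard_setOf_totient_eq_le_two_mul (N j : ℕ) :
    {x : ℕ | φ x = N}.ncard ≤ 2 * {x : ℕ | φ x = 2 ^ j * N}.ncard := by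
  set F := {x : ℕ | φ x = 2 ^ j * N}
  have hcover : {x : ℕ | φ x = N} ⊆ (· / 2 ^ j) '' F ∪ (· / 2 ^ (j + 1)) '' F := by
    rintro x (hx : φ x = N)
    rcases Nat.even_or_odd x with heven | hodd
    · refine Or.inl ⟨2 ^ j * x, ?_, by simp⟩
      simp only [F, Set.mem_ofPred_eq, totient_two_pow_mul_of_even heven, hx]
    · refine Or.inr ⟨2 ^ (j + 1) * x, ?_, by simp⟩
      simp only [F, Set.mem_ofPred_eq, totient_two_pow_succ_mul_of_odd hodd, hx]
  have hF : F.Finite := finite_setOf_totient_eq _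
  calc {x : ℕ | φ x = N}.ncard
      ≤ ((· / 2 ^ j) '' F ∪ (· / 2 ^ (j + 1)) '' F).ncard :=
        Set.ncard_le_ncard hcover ((hF.image _).union (hF.image _))
    _ ≤ ((· / 2 ^ j) '' F).ncard + ((· / 2 ^ (j + 1)) '' F).ncard := Set.ncard_union_le _ _
    _ ≤ F.ncard + F.ncard := add_le_add (Set.ncard_image_le hF) (Set.ncard_image_le hF)
    _ = 2 * F.ncard := (two_mul _).symm

end Nat

theorem multiplicity_ge_two_of_A_two_r_eq_four_general
    (k r m : ℕ) (hk : 1 ≤ k) (hm : m = 2 ^ k * r)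
    (h4 : {x : ℕ | Nat.totient x = 2 * r}.ncard = 4) :
    2 ≤ {x : ℕ | Nat.totient x = m}.ncard := by
  have hm' : m = 2 ^ (k - 1) * (2 * r) := by
    rw [hm, ← mul_assoc, ← pow_succ, Nat.sub_add_cancel hk]
  have := Nat.ncard_setOf_totient_eq_le_two_mul (2 * r) (k - 1)
  rw [h4, ← hm'] at this
  omega

theorem multiplicity_ge_two_of_A_two_r_eq_four
    (k r m : ℕ) (hk : 1 ≤ k) (hr : Odd r) (hm : m = 2 ^ k * r)
    (h4 : {x : ℕ | Nat.totient x = 2 * r}.ncard = 4) :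
    2 ≤ {x : ℕ | Nat.totient x = m}.ncard :=
  multiplicity_ge_two_of_A_two_r_eq_four_general k r m hk hm h4
end

section
/- Let T₄(x) be the number of integers n ≤ x with n ≡ 2 (mod 4) such that φ^{-1}(n) has exactly 4 elements. Then T₄(x) = o(√x) as x → ∞. -/
/-!
If `n ≡ 2 (mod 4)`, no `m ∈ φ⁻¹(n)` can be a product of two coprime factors `> 2` (each
contributes an even totient), so `m` is `4`, an odd prime power `p ^ k` or twice one, and
`φ (2 p ^ k) = φ (p ^ k)`. Unless some `p ^ k` with `k ≥ 2` lies in `φ⁻¹(n)`, this leaves only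
`4`, `n + 1` and `2 (n + 1)`, so `|φ⁻¹(n)| ≤ 3`. Hence `T₄(x)` is at most the number of values
`φ (p ^ a) = p ^ (a - 1) (p - 1) ≤ x` with `a ≥ 2`: for `a = 2` we have `p ≤ √x + 1`, giving
`π(√x + 1) = o(√x)` values by Chebyshev's bound, and for `a ≥ 3` we have `p ≤ x^(1/3) + 1` and
`a ≤ log₂ x + 1`, giving `O(x^(1/3) log x)` values.
-/

open Filter Asymptotics Finset
open scoped Nat Nat.Prime

theorem natCast_le_rpow_inv_of_pow_le {m x k : ℕ} (hk : k ≠ 0) (h : m ^ k ≤ x) :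
    (m : ℝ) ≤ (x : ℝ) ^ (k⁻¹ : ℝ) := by
  rw [Real.le_rpow_inv_iff_of_pos (by positivity) (by positivity) (by positivity),
    Real.rpow_natCast]
  exact_mod_cast h

namespace Nat

theorem four_dvd_totient_mul {a b : ℕ} (hab : a.Coprime b) (ha : 2 < a) (hb : 2 < b) :
    4 ∣ φ (a * b) := by
  rw [totient_mul hab]
  exact mul_dvd_mul (totient_even ha).two_dvd (totient_even hb).two_dvd

theorem isPrimePow_of_odd_of_totient_mod_four_eq_two {m : ℕ} (hm : Odd m)
    (h : φ m % 4 = 2) : IsPrimePow m := by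
  have hm1 : m ≠ 1 := by rintro rfl; simp at h
  set p := m.minFac
  have hp : p.Prime := minFac_prime hm1
  obtain ⟨k, r, hpr, hkr⟩ := exists_eq_pow_mul_and_not_dvd hm.pos.ne' p hp.ne_one
  have hk : k ≠ 0 := by
    rintro rfl
    rw [pow_zero, one_mul] at hkr
    subst hkr
    exact hpr (minFac_dvd m)
  by_cases hr : r = 1
  · subst hr
    exact (isPrimePow_nat_iff m).2 ⟨p, k, hp, pos_of_ne_zero hk, by simpa using hkr.symm⟩
  · have hp2 : p ≠ 2 := fun h2 => hm.not_two_dvd_nat (h2 ▸ minFac_dvd m)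
    have hr3 : 2 < r := by
      have := Nat.odd_iff.1 (hm.of_dvd_nat (hkr ▸ dvd_mul_left r _))
      omega
    have hpk : 2 < p ^ k := by
      have := hp.two_le
      exact lt_of_lt_of_le (by omega) (le_self_pow hk p)
    have := four_dvd_totient_mul ((hp.coprime_iff_not_dvd.2 hpr).pow_left k) hpk hr3
    rw [← hkr] at this
    omega

theorem eq_four_or_eq_two_mul_odd_of_totient_mod_four_eq_two {m : ℕ} (hm : Even m)
    (h : φ m % 4 = 2) : m = 4 ∨ ∃ o, Odd o ∧ m = 2 * o := by
  have hm0 : m ≠ 0 := by rintro rfl; simp at h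
  obtain ⟨e, o, ho, rfl⟩ := exists_eq_two_pow_mul_odd hm0
  have he : e ≠ 0 := by
    rintro rfl
    simp only [pow_zero, one_mul] at hm
    exact (not_even_iff_odd.2 ho) hm
  by_cases he1 : e = 1
  · exact .inr ⟨o, ho, by simp [he1]⟩
  have h4 : 4 ≤ 2 ^ e := by
    calc 4 = 2 ^ 2 := rfl
      _ ≤ 2 ^ e := pow_le_pow_right₀ (by norm_num) (by omega)
  by_cases ho1 : o = 1
  · subst ho1
    rw [mul_one, totient_prime_pow prime_two (pos_of_ne_zero he)] at h
    obtain ⟨f, rfl⟩ : ∃ f, e = f + 2 := ⟨e - 2, by omega⟩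
    rcases f with _ | f
    · exact .inl rfl
    · simp [pow_succ, mul_assoc] at h
  · have := four_dvd_totient_mul (Coprime.pow_left e (coprime_two_left.2 ho)) (by omega)
      (by have := Nat.odd_iff.1 ho; omega)
    omega

theorem totient_preimage_subset_of_mod_four_eq_two {n : ℕ} (hn : n % 4 = 2)
    (h : ∀ p a, p.Prime → 2 ≤ a → φ (p ^ a) ≠ n) :
    {m | φ m = n} ⊆ {4, n + 1, 2 * (n + 1)} := by
  have hodd : ∀ o, Odd o → φ o = n → o = n + 1 := by
    intro o ho hφ
    obtain ⟨p, k, hp, hk, rfl⟩ :=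
      (isPrimePow_nat_iff o).1 (isPrimePow_of_odd_of_totient_mod_four_eq_two ho (hφ ▸ hn))
    obtain rfl : k = 1 := by
      by_contra hk1
      exact h p k hp (by omega) hφ
    rw [pow_one] at hφ ⊢
    rw [totient_prime hp] at hφ
    have := hp.one_lt
    omega
  intro m (hm : φ m = n)
  rcases m.even_or_odd with he | ho
  · obtain rfl | ⟨o, ho, rfl⟩ :=
      eq_four_or_eq_two_mul_odd_of_totient_mod_four_eq_two he (hm ▸ hn)
    · exact .inl rfl
    · rw [totient_two_mul_of_odd ho] at hm
      simp [hodd o ho hm]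
  · simp [hodd m ho hm]

theorem exists_prime_pow_totient_eq_of_three_lt_ncard {n : ℕ} (hn : n % 4 = 2)
    (h3 : 3 < {m | φ m = n}.ncard) : ∃ p a, p.Prime ∧ 2 ≤ a ∧ φ (p ^ a) = n := by
  by_contra! h
  have hle :=
    Set.ncard_le_ncard (totient_preimage_subset_of_mod_four_eq_two hn h) (Set.toFinite _)
  have hcard : ({4, n + 1, 2 * (n + 1)} : Set ℕ).ncard ≤ 3 := by
    grw [Set.ncard_insert_le, Set.ncard_insert_le, Set.ncard_singleton]
  omega

theorem sub_one_pow_le_totient_prime_pow {p a : ℕ} (hp : p.Prime) (ha : a ≠ 0) :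
    (p - 1) ^ a ≤ φ (p ^ a) := by
  rw [totient_prime_pow hp (pos_of_ne_zero ha), ← pow_sub_one_mul ha]
  exact Nat.mul_le_mul_right _ (Nat.pow_le_pow_left (sub_le p 1) _)

theorem two_pow_sub_one_le_totient_prime_pow {p a : ℕ} (hp : p.Prime) (ha : a ≠ 0) :
    2 ^ (a - 1) ≤ φ (p ^ a) := by
  rw [totient_prime_pow hp (pos_of_ne_zero ha)]
  exact le_mul_of_le_of_one_le (Nat.pow_le_pow_left hp.two_le _) (by have := hp.two_le; omega)

theorem le_floor_sqrt_add_one_of_totient_prime_sq_le {p x : ℕ} (hp : p.Prime)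
    (h : φ (p ^ 2) ≤ x) : p ≤ ⌊√x + 1⌋₊ := by
  have hsq : ((p - 1 : ℕ) : ℝ) ≤ √x := (Real.le_sqrt (by positivity) (by positivity)).2
    (by exact_mod_cast (sub_one_pow_le_totient_prime_pow hp two_ne_zero).trans h)
  refine le_floor ?_
  push_cast [Nat.cast_sub hp.one_le] at hsq ⊢
  linarith

theorem sub_one_le_floor_rpow_of_totient_prime_pow_le {p a x : ℕ} (hp : p.Prime) (ha : 3 ≤ a)
    (h : φ (p ^ a) ≤ x) : p - 1 ≤ ⌊(x : ℝ) ^ (3⁻¹ : ℝ)⌋₊ := by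
  refine le_floor ?_
  simpa using natCast_le_rpow_inv_of_pow_le three_ne_zero <|
    (Nat.pow_le_pow_right (by have := hp.two_le; omega) ha).trans
      ((sub_one_pow_le_totient_prime_pow hp (by omega)).trans h)

theorem ncard_totient_prime_pow_le (x : ℕ) :
    ({n | n ≤ x ∧ ∃ p a, p.Prime ∧ 2 ≤ a ∧ φ (p ^ a) = n}.ncard : ℝ) ≤
      π ⌊√x + 1⌋₊ + ((x : ℝ) ^ (3⁻¹ : ℝ) + 2) * (Real.logb 2 x + 2) := by
  set squares := (primesLE ⌊√x + 1⌋₊).image fun p => φ (p ^ 2)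
  set higher := (range (⌊(x : ℝ) ^ (3⁻¹ : ℝ)⌋₊ + 2) ×ˢ range (Nat.log 2 x + 2)).image
    fun q : ℕ × ℕ => φ (q.1 ^ q.2)
  have hsub : {n | n ≤ x ∧ ∃ p a, p.Prime ∧ 2 ≤ a ∧ φ (p ^ a) = n} ⊆ ↑(squares ∪ higher) := by
    rintro n ⟨hnx, p, a, hp, ha, rfl⟩
    rcases ha.eq_or_lt with rfl | ha3
    · exact mem_union_left _ (mem_image.2
        ⟨p, mem_primesLE.2 ⟨le_floor_sqrt_add_one_of_totient_prime_sq_le hp hnx, hp⟩, rfl⟩)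
    · have hcube := sub_one_le_floor_rpow_of_totient_prime_pow_le hp ha3 hnx
      have hlog : a - 1 ≤ Nat.log 2 x := le_log_of_pow_le one_lt_two
        ((two_pow_sub_one_le_totient_prime_pow hp (by omega)).trans hnx)
      exact mem_union_right _ (mem_image.2 ⟨(p, a), mem_product.2
        ⟨mem_range.2 (by omega), mem_range.2 (by omega)⟩, rfl⟩)
  have hcard : (squares ∪ higher).card ≤
      π ⌊√x + 1⌋₊ + (⌊(x : ℝ) ^ (3⁻¹ : ℝ)⌋₊ + 2) * (Nat.log 2 x + 2) :=
    (card_union_le _ _).trans <| Nat.add_le_add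
      (Finset.card_image_le.trans (primesLE_card_eq_primeCounting _).le)
      (Finset.card_image_le.trans (by simp))
  calc _ ≤ (((squares ∪ higher).card : ℕ) : ℝ) := by
        exact_mod_cast Set.ncard_coe_finset (squares ∪ higher) ▸
          Set.ncard_le_ncard hsub (finite_toSet _)
    _ ≤ _ := by
        grw [hcard]
        push_cast
        gcongr
        · exact Nat.floor_le (by positivity)
        · exact Real.natLog_le_logb x 2

end Nat

theorem isLittleO_const_of_tendsto_atTop {α : Type*} {l : Filter α} {g : α → ℝ}
    (hg : Tendsto g l atTop) (c : ℝ) : (fun _ => c) =o[l] g :=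
  (isLittleO_const_id_atTop c).comp_tendsto hg

theorem primeCounting_floor_isLittleO_id : (fun y : ℝ => (π ⌊y⌋₊ : ℝ)) =o[atTop] id := by
  have hbig : (fun y : ℝ => (π ⌊y⌋₊ : ℝ)) =O[atTop] fun y => y * (Real.log y)⁻¹ := by
    refine IsBigO.of_bound (Real.log 4 + 1) ?_
    filter_upwards [Chebyshev.eventually_primeCounting_le one_pos, eventually_ge_atTop 1]
      with y hπ hy
    have : 0 ≤ Real.log y := Real.log_nonneg hy
    rw [Real.norm_natCast, Real.norm_of_nonneg (by positivity), ← div_eq_mul_inv,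
      ← mul_div_assoc]
    exact hπ
  have hlog : (fun y : ℝ => (Real.log y)⁻¹) =o[atTop] fun _ => (1 : ℝ) :=
    (isLittleO_one_iff ℝ).2 (tendsto_inv_atTop_zero.comp Real.tendsto_log_atTop)
  simpa [Function.id_def] using
    hbig.trans_isLittleO ((isBigO_refl id atTop).mul_isLittleO hlog)

theorem primeCounting_floor_sqrt_add_one_isLittleO :
    (fun t : ℝ => (π ⌊√t + 1⌋₊ : ℝ)) =o[atTop] (√·) := by
  have hsqrt : Tendsto (fun t : ℝ => √t + 1) atTop atTop :=
    tendsto_atTop_add_const_right _ 1 Real.tendsto_sqrt_atTop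
  refine (primeCounting_floor_isLittleO_id.comp_tendsto hsqrt).trans_isBigO ?_
  exact (isBigO_refl _ _).add (isLittleO_const_of_tendsto_atTop Real.tendsto_sqrt_atTop 1).isBigO

theorem rpow_add_two_mul_logb_add_two_isLittleO_sqrt :
    (fun t : ℝ => (t ^ (3⁻¹ : ℝ) + 2) * (Real.logb 2 t + 2)) =o[atTop] (√·) := by
  have hcube : (fun t : ℝ => t ^ (3⁻¹ : ℝ) + 2) =O[atTop] fun t => t ^ (3⁻¹ : ℝ) :=
    (isBigO_refl _ _).add
      (isLittleO_const_of_tendsto_atTop (tendsto_rpow_atTop (by norm_num)) 2).isBigO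
  have hlog : (fun t : ℝ => Real.logb 2 t + 2) =o[atTop] fun t => t ^ (6⁻¹ : ℝ) :=
    (((isLittleO_log_rpow_atTop (by norm_num)).const_mul_left (Real.log 2)⁻¹).congr_left
      fun t => by rw [Real.logb, inv_mul_eq_div]).add
      (isLittleO_const_of_tendsto_atTop (tendsto_rpow_atTop (by norm_num)) 2)
  refine (hcube.mul_isLittleO hlog).congr' .rfl ?_
  filter_upwards [eventually_gt_atTop 0] with t ht
  rw [← Real.rpow_add ht, Real.sqrt_eq_rpow]
  norm_num

theorem T4_little_o_sqrt :
    Tendsto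
      (fun x : ℕ =>
        (({n : ℕ | n ≤ x ∧ n % 4 = 2 ∧
            {m : ℕ | Nat.totient m = n}.ncard = 4}.ncard : ℝ)) / Real.sqrt x)
      atTop (nhds 0) := by
  have hcount (x : ℕ) : ({n : ℕ | n ≤ x ∧ n % 4 = 2 ∧ {m | φ m = n}.ncard = 4}.ncard : ℝ) ≤
      π ⌊√x + 1⌋₊ + ((x : ℝ) ^ (3⁻¹ : ℝ) + 2) * (Real.logb 2 x + 2) := by
    refine le_trans (Nat.cast_le.2 (Set.ncard_le_ncard ?_ ?_)) (Nat.ncard_totient_prime_pow_le x)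
    · exact fun n ⟨hnx, hn, h4⟩ =>
        ⟨hnx, Nat.exists_prime_pow_totient_eq_of_three_lt_ncard hn (h4 ▸ by norm_num)⟩
    · exact (Set.finite_Iic x).subset fun n hn => hn.1
  have hbound := (primeCounting_floor_sqrt_add_one_isLittleO.add
    rpow_add_two_mul_logb_add_two_isLittleO_sqrt).comp_tendsto tendsto_natCast_atTop_atTop
  refine squeeze_zero (fun x => by positivity)
    (fun x => div_le_div_of_nonneg_right (hcount x) (Real.sqrt_nonneg _)) ?_
  exact hbound.tendsto_div_nhds_zero
end

section
/- Let C(x) count the odd-half pairs: the number of n ≤ x − 4 with n ≡ 2 (mod 4) such that both n and n + 4 are totients. Assuming the number of cousin prime pairs up to x is o(√x), C(x) = o(√x). -/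
/-!
If `φ m ≡ 2 (mod 4)`, then `m` has at most one odd prime factor and its `2`-part contributes
nothing to `φ m`, so `φ m = φ (q ^ k)` for a prime `q`. Either `k = 1` and `φ m + 1 = q` is prime,
or `φ m` is the totient of a proper prime power. So a counted pair `n, n + 4` comes from a cousin
pair `(n + 1, n + 5)`, or one of `n, n + 4` is some `φ (q ^ k) = q ^ (k - 1) (q - 1)` with `k ≥ 2`.
These values are rare: since `q ^ k ≤ 2 φ (q ^ k)`, those up to `x` with `k = 2` number at most
`π (√(2x)) = o(√x)`, and those with `k ≥ 3` have `q ≤ (2x)^(1/3)` and `k ≤ log₂ (2x)`.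
-/

open Filter Asymptotics Finset
open scoped Nat Nat.Prime

def properPrimePowerTotients : Set ℕ := {n | ∃ q k, q.Prime ∧ 2 ≤ k ∧ φ (q ^ k) = n}

namespace Nat

lemma exists_totient_eq_totient_prime_pow_of_mod_four_eq_two {m : ℕ} (h : φ m % 4 = 2) :
    ∃ q k, q.Prime ∧ 0 < k ∧ φ m = φ (q ^ k) := by
  have hm : m ≠ 0 := by rintro rfl; simp at h
  by_cases hodd : ∃ q, q.Prime ∧ q ∣ m ∧ q ≠ 2
  · obtain ⟨q, hq, hqm, hq2⟩ := hodd
    obtain ⟨k, r, hqr, rfl⟩ := exists_eq_pow_mul_and_not_dvd hm q hq.ne_one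
    have hk : k ≠ 0 := by rintro rfl; simp_all
    rw [totient_mul ((hq.coprime_iff_not_dvd.2 hqr).pow_left k)] at h ⊢
    -- `φ (q ^ k)` is even, so `φ r` must be odd, which forces `r ≤ 2`
    have hr : r ≤ 2 := by
      by_contra! hr
      have hq3 : 2 < q ^ k := (hq.two_le.lt_of_ne' hq2).trans_le (le_self_pow hk q)
      have : 4 ∣ φ (q ^ k) * φ r :=
        mul_dvd_mul (totient_even hq3).two_dvd (totient_even hr).two_dvd
      omega
    have hr0 : r ≠ 0 := by rintro rfl; simp at hm
    rw [(totient_eq_one_iff (n := r)).2 (by omega), mul_one]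
    exact ⟨q, k, hq, pos_of_ne_zero hk, rfl⟩
  · push Not at hodd
    have hm2 := eq_prime_pow_of_unique_prime_dvd hm fun hd hdm => hodd _ hd hdm
    refine ⟨2, _, prime_two, pos_of_ne_zero fun h0 => ?_, congrArg φ hm2⟩
    rw [h0, pow_zero] at hm2
    simp [hm2] at h

lemma totient_add_one_prime_or_mem_properPrimePowerTotients {m : ℕ} (h : φ m % 4 = 2) :
    (φ m + 1).Prime ∨ φ m ∈ properPrimePowerTotients := by
  obtain ⟨q, k, hq, hk, hmq⟩ := exists_totient_eq_totient_prime_pow_of_mod_four_eq_two h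
  obtain rfl | hk2 := (show k = 1 ∨ 2 ≤ k by omega)
  · left
    rwa [hmq, pow_one, totient_prime hq, Nat.sub_add_cancel hq.one_le]
  · exact Or.inr ⟨q, k, hq, hk2, hmq.symm⟩

lemma pow_le_two_mul_totient_prime_pow {q : ℕ} (hq : q.Prime) (k : ℕ) :
    q ^ k ≤ 2 * φ (q ^ k) := by
  cases k with
  | zero => simp
  | succ k =>
    rw [totient_prime_pow_succ hq, pow_succ]
    have := hq.two_le
    calc q ^ k * q ≤ q ^ k * (2 * (q - 1)) := Nat.mul_le_mul_left _ (by omega)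
      _ = 2 * (q ^ k * (q - 1)) := by ring

end Nat

lemma setOf_le_mem_properPrimePowerTotients_subset (x : ℕ) :
    {n | n ≤ x ∧ n ∈ properPrimePowerTotients} ⊆
      ↑((Nat.primesLE ⌊√(2 * x : ℝ)⌋₊).image (fun q => φ (q ^ 2)) ∪
        (Iic ⌊(2 * x : ℝ) ^ (3⁻¹ : ℝ)⌋₊ ×ˢ Iic (Nat.log 2 (2 * x))).image
          (fun p => φ (p.1 ^ p.2))) := by
  rintro n ⟨hnx, q, k, hq, hk, rfl⟩
  have hpow : ((q ^ k : ℕ) : ℝ) ≤ 2 * x := by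
    exact_mod_cast (Nat.pow_le_two_mul_totient_prime_pow hq k).trans (by omega)
  simp only [coe_union, coe_image, Set.mem_union, Set.mem_image, mem_coe, Nat.mem_primesLE,
    mem_product, mem_Iic]
  obtain rfl | hk3 := (show k = 2 ∨ 3 ≤ k by omega)
  · refine Or.inl ⟨q, ⟨Nat.le_floor ?_, hq⟩, rfl⟩
    exact Real.le_sqrt_of_sq_le (by exact_mod_cast hpow)
  · refine Or.inr ⟨(q, k), ⟨Nat.le_floor ?_, Nat.le_log_of_pow_le one_lt_two ?_⟩, rfl⟩
    · rw [Real.le_rpow_inv_iff_of_pos (by positivity) (by positivity) (by norm_num)]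
      calc (q : ℝ) ^ (3 : ℝ) = ((q ^ 3 : ℕ) : ℝ) := by norm_cast
        _ ≤ ((q ^ k : ℕ) : ℝ) := by gcongr; exact hq.one_le
        _ ≤ 2 * x := hpow
    · calc 2 ^ k ≤ q ^ k := Nat.pow_le_pow_left hq.two_le k
        _ ≤ 2 * x := by exact_mod_cast hpow

lemma ncard_setOf_le_mem_properPrimePowerTotients_le (x : ℕ) :
    {n | n ≤ x ∧ n ∈ properPrimePowerTotients}.ncard ≤
      π ⌊√(2 * x : ℝ)⌋₊ + (⌊(2 * x : ℝ) ^ (3⁻¹ : ℝ)⌋₊ + 1) * (Nat.log 2 (2 * x) + 1) := by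
  refine (Set.ncard_le_ncard (setOf_le_mem_properPrimePowerTotients_subset x)
    (Finset.finite_toSet _)).trans ?_
  rw [Set.ncard_coe_finset, ← Nat.primesLE_card_eq_primeCounting]
  refine (card_union_le _ _).trans (add_le_add card_image_le (card_image_le.trans ?_))
  simp

lemma ncard_setOf_add_le_le (P : Set ℕ) (x c : ℕ) :
    {n | n + c ≤ x ∧ n + c ∈ P}.ncard ≤ {n | n ≤ x ∧ n ∈ P}.ncard :=
  Set.ncard_le_ncard_of_injOn (· + c) (fun _ hn => hn) (fun _ _ _ _ => Nat.add_right_cancel)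
    ((Set.finite_Iic x).subset fun _ hn => hn.1)

lemma setOf_totient_pairs_subset (x : ℕ) :
    {n : ℕ | n + 4 ≤ x ∧ n % 4 = 2 ∧ (∃ a : ℕ, φ a = n) ∧ ∃ b : ℕ, φ b = n + 4} ⊆
      {n | n + 1 ≤ x ∧ n + 1 ∈ {p | p.Prime ∧ (p + 4).Prime}} ∪
        {n | n ≤ x ∧ n ∈ properPrimePowerTotients} ∪
        {n | n + 4 ≤ x ∧ n + 4 ∈ properPrimePowerTotients} := by
  rintro n ⟨hnx, hn4, ⟨a, rfl⟩, b, hb⟩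
  obtain ha | ha := Nat.totient_add_one_prime_or_mem_properPrimePowerTotients hn4
  · obtain hb' | hb' :=
      Nat.totient_add_one_prime_or_mem_properPrimePowerTotients (m := b) (by omega)
    · exact Or.inl (Or.inl ⟨by omega, ha, by rwa [hb] at hb'⟩)
    · exact Or.inr ⟨hnx, hb ▸ hb'⟩
  · exact Or.inl (Or.inr ⟨by omega, ha⟩)

lemma ncard_totient_pairs_le (x : ℕ) :
    {n : ℕ | n + 4 ≤ x ∧ n % 4 = 2 ∧ (∃ a : ℕ, φ a = n) ∧ ∃ b : ℕ, φ b = n + 4}.ncard ≤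
      {p : ℕ | p ≤ x ∧ p.Prime ∧ (p + 4).Prime}.ncard +
        2 * {n | n ≤ x ∧ n ∈ properPrimePowerTotients}.ncard := by
  refine (Set.ncard_le_ncard (setOf_totient_pairs_subset x)
    ((Set.finite_Iic x).subset fun n hn => ?_)).trans ?_
  · simp only [Set.mem_union, Set.mem_ofPred_eq] at hn
    exact Set.mem_Iic.2 (by omega)
  refine (Set.ncard_union_le _ _).trans ?_
  grw [Set.ncard_union_le, ncard_setOf_add_le_le _ x 1, ncard_setOf_add_le_le _ x 4]
  rw [add_assoc, ← two_mul]
  rfl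

lemma isLittleO_primeCounting_floor : (fun y : ℝ => (π ⌊y⌋₊ : ℝ)) =o[atTop] fun y => y := by
  have hbound : (fun y : ℝ => (π ⌊y⌋₊ : ℝ)) =O[atTop] fun y => y * (Real.log y)⁻¹ := by
    refine IsBigO.of_bound (Real.log 4 + 1) ?_
    filter_upwards [Chebyshev.eventually_primeCounting_le one_pos,
      eventually_ge_atTop (1 : ℝ)] with y hy hy1
    rw [Real.norm_natCast, Real.norm_of_nonneg (by have := Real.log_nonneg hy1; positivity)]
    linarith [show (Real.log 4 + 1) * y / Real.log y = (Real.log 4 + 1) * (y * (Real.log y)⁻¹)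
      by ring]
  refine hbound.trans_isLittleO ?_
  simpa using (isBigO_refl (fun y : ℝ => y) atTop).mul_isLittleO
    ((isLittleO_one_iff ℝ).2 (tendsto_inv_atTop_zero.comp Real.tendsto_log_atTop))

lemma isLittleO_floor_rpow_mul_logb :
    (fun y : ℝ => (⌊y ^ (3⁻¹ : ℝ)⌋₊ + 1 : ℝ) * (Real.logb 2 y + 1)) =o[atTop] (√·) := by
  have hone : ∀ r : ℝ, 0 < r → (fun _ : ℝ => (1 : ℝ)) =o[atTop] fun y => y ^ r := fun r hr =>
    (isLittleO_one_left_iff ℝ).2 (tendsto_norm_atTop_atTop.comp (tendsto_rpow_atTop hr))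
  have hfloor : (fun y : ℝ => (⌊y ^ (3⁻¹ : ℝ)⌋₊ + 1 : ℝ)) =O[atTop] fun y => y ^ (3⁻¹ : ℝ) := by
    refine IsBigO.add (IsBigO.of_bound 1 ?_) (hone _ (by norm_num)).isBigO
    filter_upwards [eventually_ge_atTop 0] with y hy
    have := Real.rpow_nonneg hy (3⁻¹ : ℝ)
    rw [Real.norm_natCast, one_mul, Real.norm_of_nonneg this]
    exact Nat.floor_le this
  have hlog : (fun y : ℝ => Real.logb 2 y + 1) =o[atTop] fun y => y ^ (6⁻¹ : ℝ) := by
    refine IsLittleO.add ?_ (hone _ (by norm_num))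
    refine ((isLittleO_log_rpow_atTop (by norm_num)).const_mul_left (Real.log 2)⁻¹).congr_left ?_
    intro y
    rw [Real.logb, div_eq_inv_mul]
  refine (hfloor.mul_isLittleO hlog).congr' EventuallyEq.rfl ?_
  filter_upwards [eventually_gt_atTop 0] with y hy
  rw [← Real.rpow_add hy, Real.sqrt_eq_rpow]
  norm_num

lemma isLittleO_ncard_setOf_le_mem_properPrimePowerTotients :
    (fun x : ℕ => ({n | n ≤ x ∧ n ∈ properPrimePowerTotients}.ncard : ℝ)) =o[atTop]
      fun x => √(x : ℝ) := by
  have hF : (fun y : ℝ => (π ⌊√y⌋₊ : ℝ) + (⌊y ^ (3⁻¹ : ℝ)⌋₊ + 1 : ℝ) * (Real.logb 2 y + 1))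
      =o[atTop] (√·) :=
    (isLittleO_primeCounting_floor.comp_tendsto Real.tendsto_sqrt_atTop).add
      isLittleO_floor_rpow_mul_logb
  have h2x : Tendsto (fun x : ℕ => (2 * x : ℝ)) atTop atTop :=
    tendsto_natCast_atTop_atTop.const_mul_atTop two_pos
  refine (isBigO_of_le _ fun x => ?_).trans_isLittleO ((hF.comp_tendsto h2x).trans_isBigO ?_)
  · have hlog := Real.natLog_le_logb (2 * x) 2
    push_cast at hlog
    rw [Real.norm_natCast]
    refine le_trans ?_ (le_abs_self _)
    calc _ ≤ ((π ⌊√(2 * x : ℝ)⌋₊ + (⌊(2 * x : ℝ) ^ (3⁻¹ : ℝ)⌋₊ + 1) *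
          (Nat.log 2 (2 * x) + 1) : ℕ) : ℝ) := by
          exact_mod_cast ncard_setOf_le_mem_properPrimePowerTotients_le x
      _ ≤ _ := by
        push_cast
        rw [Function.comp_apply]
        gcongr
  · simp_rw [Function.comp_def, Real.sqrt_mul zero_le_two]
    exact (isBigO_refl _ _).const_mul_left _

theorem consecutive_totient_pairs_little_o_sqrt
    (hcousin : Tendsto
      (fun x : ℕ =>
        (({p : ℕ | p ≤ x ∧ p.Prime ∧ Nat.Prime (p + 4)}.ncard : ℝ)) /
          Real.sqrt x)
      atTop (nhds 0)) :
    Tendsto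
      (fun x : ℕ =>
        (({n : ℕ | n + 4 ≤ x ∧ n % 4 = 2 ∧
            (∃ a : ℕ, Nat.totient a = n) ∧
            (∃ b : ℕ, Nat.totient b = n + 4)}.ncard : ℝ)) / Real.sqrt x)
      atTop (nhds 0) := by
  have hcousin' : (fun x : ℕ => ({p : ℕ | p ≤ x ∧ p.Prime ∧ Nat.Prime (p + 4)}.ncard : ℝ))
      =o[atTop] fun x => √(x : ℝ) := by
    refine (isLittleO_iff_tendsto' ?_).2 hcousin
    filter_upwards [eventually_ge_atTop 1] with x hx h0
    rw [Real.sqrt_eq_zero (Nat.cast_nonneg _), Nat.cast_eq_zero] at h0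
    omega
  refine IsLittleO.tendsto_div_nhds_zero ?_
  refine (isBigO_of_le _ fun x => ?_).trans_isLittleO
    (hcousin'.add (isLittleO_ncard_setOf_le_mem_properPrimePowerTotients.const_mul_left 2))
  rw [Real.norm_natCast, Real.norm_of_nonneg (by positivity)]
  exact_mod_cast ncard_totient_pairs_le x
end
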